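/- Let S be a compact affine right topological semigroup, J a minimal closed left ideal, and y ∈ J. Then the continuous affine self-map x ↦ x*y of J has a fixed point (via the Markov–Kakutani fixed point theorem), i.e., there exists x ∈ J with x*y = x. -/

import Mathlib

/-!
Right multiplication by `y` maps `S` onto a closed left ideal inside `J`, so by minimality
`J = S * y`; hence `J` is compact and convex and `x ↦ x * y` is a continuous affine self-map
of `J`. For such a map `f` of a compact convex set, the Cesàro means `b n` of an orbit satisfy
`(n + 1) • (f (b n) - b n) = f^[n+1] x₀ - x₀`, which lies in the bounded set `J - J`; so
`f (b n) - b n → 0`, and since the image of `J` under `z ↦ f z - z` is compact, hence closed,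
it contains `0`.
-/

open Filter Topology Set

section AffineOn

variable {𝕜 E F : Type*} [Semiring 𝕜] [PartialOrder 𝕜] [AddCommMonoid E] [AddCommMonoid F]
  [Module 𝕜 E] [Module 𝕜 F]

variable (𝕜) in
def AffineOn (s : Set E) (f : E → F) : Prop :=
  ∀ a b : 𝕜, 0 ≤ a → 0 ≤ b → a + b = 1 →
    ∀ x ∈ s, ∀ x' ∈ s, f (a • x + b • x') = a • f x + b • f x'

variable {s t : Set E} {f : E → F}

theorem AffineOn.mono (hf : AffineOn 𝕜 s f) (hts : t ⊆ s) : AffineOn 𝕜 t f :=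
  fun a b ha hb hab x hx x' hx' => hf a b ha hb hab x (hts hx) x' (hts hx')

theorem Convex.image_of_affineOn (hs : Convex 𝕜 s) (hf : AffineOn 𝕜 s f) :
    Convex 𝕜 (f '' s) := by
  rintro _ ⟨x, hx, rfl⟩ _ ⟨x', hx', rfl⟩ a b ha hb hab
  exact ⟨a • x + b • x', hs hx hx' ha hb hab, hf a b ha hb hab x hx x' hx'⟩

end AffineOn

section CesaroMean

variable {E : Type*} [AddCommGroup E] [Module ℝ E]

/-- `cesaroMean f x₀ n = (n + 1)⁻¹ • ∑ k ≤ n, f^[k] x₀`, written recursively so that each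
step is a convex combination of two points. -/
noncomputable def cesaroMean (f : E → E) (x₀ : E) : ℕ → E
  | 0 => x₀
  | n + 1 => ((n : ℝ) + 2)⁻¹ • f^[n + 1] x₀
      + (((n : ℝ) + 1) / ((n : ℝ) + 2)) • cesaroMean f x₀ n

theorem inv_add_div_add_two_eq_one (n : ℕ) :
    ((n : ℝ) + 2)⁻¹ + ((n : ℝ) + 1) / ((n : ℝ) + 2) = 1 := by
  field_simp
  ring

variable {K : Set E} {f : E → E} {x₀ : E}

theorem cesaroMean_mem (hK : Convex ℝ K) (hfK : MapsTo f K K) (hx₀ : x₀ ∈ K) (n : ℕ) :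
    cesaroMean f x₀ n ∈ K := by
  induction n with
  | zero => exact hx₀
  | succ n ih =>
    exact hK (hfK.iterate (n + 1) hx₀) ih (by positivity) (by positivity)
      (inv_add_div_add_two_eq_one n)

theorem natCast_add_one_smul_map_cesaroMean_sub (hK : Convex ℝ K) (hfK : MapsTo f K K)
    (hf : AffineOn ℝ K f) (hx₀ : x₀ ∈ K) (n : ℕ) :
    ((n : ℝ) + 1) • (f (cesaroMean f x₀ n) - cesaroMean f x₀ n)
      = f^[n + 1] x₀ - x₀ := by
  induction n with
  | zero => simp [cesaroMean]
  | succ n ih =>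
    have hmap : f (cesaroMean f x₀ (n + 1)) = ((n : ℝ) + 2)⁻¹ • f^[n + 2] x₀
        + (((n : ℝ) + 1) / ((n : ℝ) + 2)) • f (cesaroMean f x₀ n) := by
      rw [cesaroMean, hf _ _ (by positivity) (by positivity) (inv_add_div_add_two_eq_one n) _
        (hfK.iterate (n + 1) hx₀) _ (cesaroMean_mem hK hfK hx₀ n),
        ← Function.iterate_succ_apply' f]
    have htelescope :
        f^[n + 2] x₀ - x₀ = (f^[n + 2] x₀ - f^[n + 1] x₀) + (f^[n + 1] x₀ - x₀) := by
      abel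
    rw [hmap, htelescope, ← ih, cesaroMean]
    push_cast
    match_scalars <;> field_simp <;> ring

variable [TopologicalSpace E] [IsTopologicalAddGroup E] [ContinuousSMul ℝ E]

theorem tendsto_map_cesaroMean_sub (hKc : IsCompact K) (hK : Convex ℝ K) (hfK : MapsTo f K K)
    (hf : AffineOn ℝ K f) (hx₀ : x₀ ∈ K) :
    Tendsto (fun n => f (cesaroMean f x₀ n) - cesaroMean f x₀ n) atTop (𝓝 0) := by
  have hinv : Tendsto (fun n : ℕ => ((n : ℝ) + 1)⁻¹) atTop (𝓝 0) := by
    simpa only [one_div] using tendsto_one_div_add_atTop_nhds_zero_nat (𝕜 := ℝ)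
  have hsmall := ((hKc.isVonNBounded ℝ).sub (hKc.isVonNBounded ℝ)).smul_tendsto_zero
    (.of_forall fun n => sub_mem_sub (hfK.iterate (n + 1) hx₀) hx₀) hinv
  refine hsmall.congr fun n => ?_
  rw [Pi.smul_apply', ← natCast_add_one_smul_map_cesaroMean_sub hK hfK hf hx₀ n, smul_smul,
    inv_mul_cancel₀ (by positivity), one_smul]

theorem exists_fixedPoint_of_affineOn [T2Space E] (hKc : IsCompact K) (hK : Convex ℝ K)
    (hne : K.Nonempty) (hfK : MapsTo f K K) (hfc : ContinuousOn f K) (hf : AffineOn ℝ K f) :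
    ∃ x ∈ K, f x = x := by
  obtain ⟨x₀, hx₀⟩ := hne
  have hclosed : IsClosed ((fun z => f z - z) '' K) :=
    (hKc.image_of_continuousOn (hfc.sub continuousOn_id)).isClosed
  obtain ⟨x, hx, hfx⟩ := hclosed.mem_of_tendsto (tendsto_map_cesaroMean_sub hKc hK hfK hf hx₀)
    (.of_forall fun n => mem_image_of_mem _ (cesaroMean_mem hK hfK hx₀ n))
  exact ⟨x, hx, sub_eq_zero.1 hfx⟩

end CesaroMean

theorem image_mul_right_eq_of_minimal {X : Type*} [TopologicalSpace X] [T2Space X]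
    {S J : Set X} (hS : IsCompact S) (m : X → X → X)
    (hmem : ∀ x ∈ S, ∀ y ∈ S, m x y ∈ S)
    (hassoc : ∀ x ∈ S, ∀ y ∈ S, ∀ z ∈ S, m (m x y) z = m x (m y z))
    (hJ : J ⊆ S) (hJideal : ∀ x ∈ S, ∀ j ∈ J, m x j ∈ J)
    (hJmin : ∀ J' : Set X, J' ⊆ J → IsClosed J' → J'.Nonempty →
      (∀ x ∈ S, ∀ j ∈ J', m x j ∈ J') → J' = J)
    {y : X} (hy : y ∈ J) (hcont : ContinuousOn (fun x => m x y) S) :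
    (fun x => m x y) '' S = J := by
  refine hJmin _ ?_ (hS.image_of_continuousOn hcont).isClosed ⟨m y y, y, hJ hy, rfl⟩ ?_
  · rintro _ ⟨x, hx, rfl⟩
    exact hJideal x hx y hy
  · rintro x hx _ ⟨a, ha, rfl⟩
    exact ⟨m x a, hmem x hx a ha, hassoc x hx a ha y (hJ hy)⟩

theorem stmt_10_general {V : Type*} [AddCommGroup V] [Module ℝ V] [TopologicalSpace V]
    [IsTopologicalAddGroup V] [ContinuousSMul ℝ V] [T2Space V]
    (S : Set V) (hScomp : IsCompact S) (hSconv : Convex ℝ S)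
    (m : V → V → V)
    (hmem : ∀ x ∈ S, ∀ y ∈ S, m x y ∈ S)
    (hassoc : ∀ x ∈ S, ∀ y ∈ S, ∀ z ∈ S, m (m x y) z = m x (m y z))
    (haff : ∀ y ∈ S, ∀ a b : ℝ, 0 ≤ a → 0 ≤ b → a + b = 1 →
      ∀ x ∈ S, ∀ x' ∈ S, m (a • x + b • x') y = a • m x y + b • m x' y)
    (hcont : ∀ y ∈ S, ContinuousOn (fun x => m x y) S)
    (J : Set V) (hJ : J ⊆ S)
    (hJideal : ∀ x ∈ S, ∀ j ∈ J, m x j ∈ J)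
    (hJmin : ∀ J' : Set V, J' ⊆ J → IsClosed J' → J'.Nonempty →
      (∀ x ∈ S, ∀ j ∈ J', m x j ∈ J') → J' = J)
    (y : V) (hy : y ∈ J) :
    ∃ x ∈ J, m x y = x := by
  have hyS : y ∈ S := hJ hy
  have hSy : (fun x => m x y) '' S = J :=
    image_mul_right_eq_of_minimal hScomp m hmem hassoc hJ hJideal hJmin hy (hcont y hyS)
  have hJcomp : IsCompact J := hSy ▸ hScomp.image_of_continuousOn (hcont y hyS)
  have hJconv : Convex ℝ J := hSy ▸ hSconv.image_of_affineOn (haff y hyS)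
  exact exists_fixedPoint_of_affineOn hJcomp hJconv ⟨y, hy⟩
    (fun x hx => hJideal x (hJ hx) y hy) ((hcont y hyS).mono hJ) (AffineOn.mono (haff y hyS) hJ)

/-- Markov–Kakutani step: in a compact affine right topological semigroup, for
any y in a minimal closed left ideal J, right multiplication by y has a fixed
point in J. -/
theorem stmt_10 {V : Type*} [AddCommGroup V] [Module ℝ V] [TopologicalSpace V]
    [IsTopologicalAddGroup V] [ContinuousSMul ℝ V] [T2Space V]
    [LocallyConvexSpace ℝ V]
    (S : Set V) (hScomp : IsCompact S) (hSconv : Convex ℝ S)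
    (hSne : S.Nonempty)
    (m : V → V → V)
    (hmem : ∀ x ∈ S, ∀ y ∈ S, m x y ∈ S)
    (hassoc : ∀ x ∈ S, ∀ y ∈ S, ∀ z ∈ S, m (m x y) z = m x (m y z))
    (haff : ∀ y ∈ S, ∀ a b : ℝ, 0 ≤ a → 0 ≤ b → a + b = 1 →
      ∀ x ∈ S, ∀ x' ∈ S, m (a • x + b • x') y = a • m x y + b • m x' y)
    (hcont : ∀ y ∈ S, ContinuousOn (fun x => m x y) S)
    (J : Set V) (hJ : J ⊆ S) (hJcl : IsClosed J) (hJne : J.Nonempty)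
    (hJideal : ∀ x ∈ S, ∀ j ∈ J, m x j ∈ J)
    (hJmin : ∀ J' : Set V, J' ⊆ J → IsClosed J' → J'.Nonempty →
      (∀ x ∈ S, ∀ j ∈ J', m x j ∈ J') → J' = J)
    (y : V) (hy : y ∈ J) :
    ∃ x ∈ J, m x y = x :=
  stmt_10_general S hScomp hSconv m hmem hassoc haff hcont J hJ hJideal hJmin y hy
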